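/- arXiv:math/0104030 — 3 statements merged into one kernel-verified Lean document; each statement's English description precedes it below -/
import Mathlib

section
/- Let A be a ring, δ₁, δ₂ : A → A derivations, M, D ∈ A, and k, m ≥ 0 integers with k+m ≥ 1, such that δ₁(M) = D·M^k − M^k·D + M^k and δ₂(M) = D·M^m − M^m·D + M^m. Then δ₁(M^m) − δ₂(M^k) = (m − k)·M^{m+k−1}. -/
lemma der_pow_aux {A : Type*} [Ring A] (δ : A → A)
    (hleib : ∀ a b : A, δ (a * b) = δ a * b + a * δ b)
    (M D : A) (k : ℕ)
    (h : δ M = D * M ^ k - M ^ k * D + M ^ k) :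
    ∀ n : ℕ, δ (M ^ n) =
      (∑ i ∈ Finset.range n, M ^ i * D * M ^ (k + n - 1 - i))
        - (∑ i ∈ Finset.range n, M ^ (k + i) * D * M ^ (n - 1 - i))
        + n • M ^ (k + n - 1) := by
  have h1 : δ 1 = 0 := by simpa using hleib 1 1
  intro n
  induction n with
  | zero => simp [h1]
  | succ n ih =>
    rw [pow_succ, hleib, ih, h]
    have e1 : (∑ i ∈ Finset.range n, M ^ i * D * M ^ (k + n - 1 - i)) * M
        = ∑ i ∈ Finset.range n, M ^ i * D * M ^ (k + n - i) := by
      rw [Finset.sum_mul]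
      refine Finset.sum_congr rfl fun i hi => ?_
      have : k + n - 1 - i + 1 = k + n - i := by
        simp at hi; omega
      rw [mul_assoc, ← pow_succ, this]
    have e2 : (∑ i ∈ Finset.range n, M ^ (k + i) * D * M ^ (n - 1 - i)) * M
        = ∑ i ∈ Finset.range n, M ^ (k + i) * D * M ^ (n - i) := by
      rw [Finset.sum_mul]
      refine Finset.sum_congr rfl fun i hi => ?_
      have : n - 1 - i + 1 = n - i := by
        simp at hi; omega
      rw [mul_assoc, ← pow_succ, this]
    have e3 : ∑ i ∈ Finset.range (n + 1), M ^ i * D * M ^ (k + (n + 1) - 1 - i)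
        = (∑ i ∈ Finset.range n, M ^ i * D * M ^ (k + n - i)) + M ^ n * D * M ^ k := by
      have ha : k + (n + 1) - 1 - n = k := by omega
      have hb : ∀ i ∈ Finset.range n,
          M ^ i * D * M ^ (k + (n + 1) - 1 - i) = M ^ i * D * M ^ (k + n - i) := by
        intro i hi
        have : k + (n + 1) - 1 - i = k + n - i := by simp at hi; omega
        rw [this]
      rw [Finset.sum_range_succ, Finset.sum_congr rfl hb, ha]
    have e4 : ∑ i ∈ Finset.range (n + 1), M ^ (k + i) * D * M ^ (n + 1 - 1 - i)
        = (∑ i ∈ Finset.range n, M ^ (k + i) * D * M ^ (n - i)) + M ^ (k + n) * D := by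
      rw [Finset.sum_range_succ]
      congr 1
      simp
    have e5 : k + (n + 1) - 1 = k + n := by omega
    rw [e3, e4, e5]
    rw [add_mul, sub_mul, e1, e2]
    have e6 : (n • M ^ (k + n - 1)) * M = n • M ^ (k + n) := by
      rcases Nat.eq_zero_or_pos n with hn | hn
      · simp [hn]
      · rw [smul_mul_assoc, ← pow_succ]
        congr 2
        omega
    have e7 : n + k = k + n := by omega
    simp only [e6, mul_add, mul_sub, ← mul_assoc, ← pow_add, e7, succ_nsmul]
    abel

/-- If `δ₁ M = D*M^k - M^k*D + M^k` and `δ₂ M = D*M^m - M^m*D + M^m`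
for derivations `δ₁, δ₂` on a ring `A`, with `k + m ≥ 1`, then
`δ₁ (M^m) - δ₂ (M^k) = (m - k) • M^(m+k-1)`. -/
theorem stmt1 {A : Type*} [Ring A] (δ₁ δ₂ : A → A)
    (h1add : ∀ a b : A, δ₁ (a + b) = δ₁ a + δ₁ b)
    (h1leibniz : ∀ a b : A, δ₁ (a * b) = δ₁ a * b + a * δ₁ b)
    (h2add : ∀ a b : A, δ₂ (a + b) = δ₂ a + δ₂ b)
    (h2leibniz : ∀ a b : A, δ₂ (a * b) = δ₂ a * b + a * δ₂ b)
    (M D : A) (k m : ℕ) (hkm : 1 ≤ k + m)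
    (h1 : δ₁ M = D * M ^ k - M ^ k * D + M ^ k)
    (h2 : δ₂ M = D * M ^ m - M ^ m * D + M ^ m) :
    δ₁ (M ^ m) - δ₂ (M ^ k) = ((m : ℤ) - (k : ℤ)) • M ^ (m + k - 1) := by
  rw [der_pow_aux δ₁ h1leibniz M D k h1 m, der_pow_aux δ₂ h2leibniz M D m h2 k]
  set f : ℕ → A := fun t => M ^ t * D * M ^ (m + k - 1 - t) with hf
  have hS1 : (∑ i ∈ Finset.range m, M ^ i * D * M ^ (k + m - 1 - i))
      = ∑ i ∈ Finset.range m, f i := by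
    refine Finset.sum_congr rfl fun i hi => ?_
    simp only [hf]
    congr 2
    omega
  have hT2 : (∑ i ∈ Finset.range k, M ^ (m + i) * D * M ^ (k - 1 - i))
      = ∑ i ∈ Finset.range k, f (m + i) := by
    refine Finset.sum_congr rfl fun i hi => ?_
    simp only [hf]
    congr 2
    simp at hi; omega
  have hS2 : (∑ i ∈ Finset.range m, M ^ (k + i) * D * M ^ (m - 1 - i))
      = ∑ i ∈ Finset.range m, f (k + i) := by
    refine Finset.sum_congr rfl fun i hi => ?_
    simp only [hf]
    congr 2
    simp at hi; omega
  have hT1 : (∑ i ∈ Finset.range k, M ^ i * D * M ^ (m + k - 1 - i))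
      = ∑ i ∈ Finset.range k, f i := by
    refine Finset.sum_congr rfl fun i hi => rfl
  rw [hS1, hS2, hT1, hT2]
  have cancel : (∑ i ∈ Finset.range m, f i) + (∑ i ∈ Finset.range k, f (m + i))
      = (∑ i ∈ Finset.range k, f i) + (∑ i ∈ Finset.range m, f (k + i)) := by
    rw [← Finset.sum_range_add, ← Finset.sum_range_add, add_comm m k]
  have e : k + m - 1 = m + k - 1 := by omega
  rw [e]
  have smu : m • M ^ (m + k - 1) - k • M ^ (m + k - 1)
      = ((m : ℤ) - (k : ℤ)) • M ^ (m + k - 1) := by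
    rw [sub_smul, natCast_zsmul, natCast_zsmul]
  rw [← smu]
  have expand :
      ((∑ i ∈ Finset.range m, f i) - (∑ i ∈ Finset.range m, f (k + i)) + m • M ^ (m + k - 1))
        - ((∑ i ∈ Finset.range k, f i) - (∑ i ∈ Finset.range k, f (m + i)) + k • M ^ (m + k - 1))
      = ((∑ i ∈ Finset.range m, f i) + (∑ i ∈ Finset.range k, f (m + i)))
        - ((∑ i ∈ Finset.range k, f i) + (∑ i ∈ Finset.range m, f (k + i)))
        + (m • M ^ (m + k - 1) - k • M ^ (m + k - 1)) := by
    abel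
  rw [expand, cancel, sub_self, zero_add]
end

section
/- Let N ≥ 1, let η ∈ Mat_{N×N}(ℂ) and A ∈ Mat_{N×N}(ℂ) be symmetric matrices, and let b_1, …, b_N ∈ ℂ satisfy: for all α, β, if η_{αβ} ≠ 0 then b_α + b_β = 1. Then Σ_{α,β} b_α(1−b_α)(1−2b_α)·η_{αβ}·A_{αβ} = 0. -/
/-- If `η` and `A` are symmetric `N×N` complex matrices and `b` satisfies
`b_α + b_β = 1` whenever `η_{αβ} ≠ 0`, then
`∑_{α,β} b_α(1-b_α)(1-2b_α) η_{αβ} A_{αβ} = 0`. -/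
theorem stmt9 (N : ℕ) (hN : 1 ≤ N) (η A : Matrix (Fin N) (Fin N) ℂ)
    (hη : η.IsSymm) (hA : A.IsSymm) (b : Fin N → ℂ)
    (hb : ∀ α β, η α β ≠ 0 → b α + b β = 1) :
    ∑ α : Fin N, ∑ β : Fin N,
      b α * (1 - b α) * (1 - 2 * b α) * η α β * A α β = 0 := by
  set c : Fin N → ℂ := fun α => b α * (1 - b α) * (1 - 2 * b α) with hc
  have key : ∀ α β, (c α + c β) * (η α β * A α β) = 0 := by
    intro α β
    by_cases h : η α β = 0
    · simp [h]
    · have hbb := hb α β h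
      have : b β = 1 - b α := by linear_combination hbb
      simp only [hc, this]
      ring
  have hswap : (∑ α : Fin N, ∑ β : Fin N, c α * η α β * A α β)
      = ∑ α : Fin N, ∑ β : Fin N, c β * η α β * A α β := by
    rw [Finset.sum_comm]
    refine Finset.sum_congr rfl fun α _ => Finset.sum_congr rfl fun β _ => ?_
    rw [← hη.apply α β, ← hA.apply α β]
  have h2 : (∑ α : Fin N, ∑ β : Fin N, c α * η α β * A α β)
      + (∑ α : Fin N, ∑ β : Fin N, c α * η α β * A α β) = 0 := by
    nth_rewrite 2 [hswap]
    rw [← Finset.sum_add_distrib]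
    refine Finset.sum_eq_zero fun α _ => ?_
    rw [← Finset.sum_add_distrib]
    refine Finset.sum_eq_zero fun β _ => ?_
    linear_combination key α β
  have hS : (∑ α : Fin N, ∑ β : Fin N, c α * η α β * A α β) = 0 := by
    linear_combination h2 / 2
  simpa [hc] using hS
end

section
/- Let R be a commutative ℚ-algebra with a derivation δ, let n ≥ 0, and let f_0, …, f_n ∈ R. Define a_0 = −1, a_k = Σ_{i=0}^{k−1} a_i f_{n−k+i+1} for k ≥ 1, and p_k = Σ_{i=1}^{k} i·f_{n−i+1}·a_{k−i} for k ≥ 1 (with f of negative index equal to 0). Suppose an operator Y : R → R satisfies Y(f_n) = f_n, Y^{m+1}(f_n) = (m+1)·f_{n−m} + Σ_{i=0}^{m−1} f_{n−i}·Y^{m−i}(f_n) for all m ≥ 1. Then Y^k(f_n) = −p_k for every k ≥ 1. -/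
/-!
Write `F j = f (n - j)`. In generating-function terms, with `G = ∑ F_{i-1} xⁱ`, the recursion
for `a` says `A (1 - G) = -1`, so `P = x G' A` satisfies `P (1 - G) = -x G'`, while the
recursion for `Y` says `Y (1 - G) = x G'`. Coefficientwise, `p` obeys the recursion of `-Y`,
and both sequences are determined by it.
-/

open Finset

section Recursion

variable {R : Type*} [CommRing R] (F : ℕ → R)

theorem eq_of_forall_succ_eq_sum {y q : ℕ → R}
    (hy : ∀ m : ℕ, y (m + 1) = ((m : R) + 1) * F m + ∑ i ∈ range m, F i * y (m - i))
    (hq : ∀ m : ℕ, q (m + 1) = ((m : R) + 1) * F m + ∑ i ∈ range m, F i * q (m - i)) :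
    ∀ k : ℕ, 1 ≤ k → y k = q k := by
  intro k
  induction k using Nat.strong_induction_on with
  | _ k ih =>
    intro hk
    obtain ⟨m, rfl⟩ : ∃ m, k = m + 1 := ⟨k - 1, by omega⟩
    rw [hy, hq]
    congr 1
    refine sum_congr rfl fun i hi => ?_
    rw [ih (m - i) (by omega) (by simp at hi; omega)]

variable {F} {a : ℕ → R}

theorem eq_sum_range_mul_reflect (ha : ∀ k : ℕ, 1 ≤ k → a k = ∑ i ∈ range k, a i * F (k - 1 - i))
    {k : ℕ} (hk : 1 ≤ k) : a k = ∑ i ∈ range k, F i * a (k - 1 - i) := by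
  rw [ha k hk, ← sum_range_reflect]
  refine sum_congr rfl fun i hi => ?_
  simp only [mem_range] at hi
  rw [mul_comm]
  congr 2
  omega

theorem sum_range_mul_weighted_conv
    (ha : ∀ k : ℕ, 1 ≤ k → a k = ∑ i ∈ range k, a i * F (k - 1 - i)) (m : ℕ) :
    ∑ i ∈ range m, F i * ∑ j ∈ Icc 1 (m - i), (j : R) * F (j - 1) * a (m - i - j)
      = ∑ j ∈ Icc 1 m, (j : R) * F (j - 1) * a (m + 1 - j) := by
  simp_rw [mul_sum]
  rw [sum_comm' (t' := Icc 1 m) (s' := fun j => range (m + 1 - j))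
    (by intro i j; simp only [mem_range, mem_Icc]; omega)]
  refine sum_congr rfl fun j hj => ?_
  simp only [mem_Icc] at hj
  rw [eq_sum_range_mul_reflect ha (by omega : 1 ≤ m + 1 - j), mul_sum]
  refine sum_congr rfl fun i hi => ?_
  simp only [mem_range] at hi
  rw [show m - i - j = m + 1 - j - 1 - i by omega]
  ring

theorem neg_weighted_conv_succ (ha0 : a 0 = -1)
    (ha : ∀ k : ℕ, 1 ≤ k → a k = ∑ i ∈ range k, a i * F (k - 1 - i)) {p : ℕ → R}
    (hp : ∀ k : ℕ, 1 ≤ k → p k = ∑ i ∈ Icc 1 k, (i : R) * F (i - 1) * a (k - i)) (m : ℕ) :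
    -p (m + 1) = ((m : R) + 1) * F m + ∑ i ∈ range m, F i * -p (m - i) := by
  have hsum : ∑ i ∈ range m, F i * p (m - i)
      = ∑ j ∈ Icc 1 m, (j : R) * F (j - 1) * a (m + 1 - j) := by
    rw [← sum_range_mul_weighted_conv ha]
    refine sum_congr rfl fun i hi => ?_
    rw [hp _ (by simp at hi; omega)]
  rw [hp _ (by omega), sum_Icc_succ_top (by omega), Nat.sub_self, ha0, Nat.add_sub_cancel,
    ← hsum]
  simp only [mul_neg, sum_neg_distrib]
  push_cast
  ring

end Recursion

theorem stmt17_general {R : Type*} [CommRing R]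
    (n : ℕ) (f : ℤ → R)
    (a : ℕ → R) (ha0 : a 0 = -1)
    (ha : ∀ k : ℕ, 1 ≤ k →
      a k = ∑ i ∈ Finset.range k, a i * f ((n : ℤ) - (k : ℤ) + (i : ℤ) + 1))
    (p : ℕ → R)
    (hp : ∀ k : ℕ, 1 ≤ k →
      p k = ∑ i ∈ Finset.Icc 1 k, (i : R) * f ((n : ℤ) - (i : ℤ) + 1) * a (k - i))
    (Y : R → R)
    (hY1 : Y (f (n : ℤ)) = f (n : ℤ))
    (hY : ∀ m : ℕ, 1 ≤ m →
      Y^[m + 1] (f (n : ℤ)) = ((m : R) + 1) * f ((n : ℤ) - (m : ℤ))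
        + ∑ i ∈ Finset.range m, f ((n : ℤ) - (i : ℤ)) * Y^[m - i] (f (n : ℤ))) :
    ∀ k : ℕ, 1 ≤ k → Y^[k] (f (n : ℤ)) = -p k := by
  set F : ℕ → R := fun j => f ((n : ℤ) - (j : ℤ))
  have haF : ∀ k : ℕ, 1 ≤ k → a k = ∑ i ∈ range k, a i * F (k - 1 - i) := fun k hk => by
    rw [ha k hk]
    refine sum_congr rfl fun i hi => ?_
    simp only [mem_range] at hi
    congr 2
    omega
  have hpF : ∀ k : ℕ, 1 ≤ k → p k = ∑ i ∈ Icc 1 k, (i : R) * F (i - 1) * a (k - i) :=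
    fun k hk => by
      rw [hp k hk]
      refine sum_congr rfl fun i hi => ?_
      simp only [mem_Icc] at hi
      congr 3
      omega
  have hYF : ∀ m : ℕ, Y^[m + 1] (f n) = ((m : R) + 1) * F m
      + ∑ i ∈ range m, F i * Y^[m - i] (f n) := by
    rintro (_ | m)
    · simp [F, hY1]
    · exact hY _ (by omega)
  exact eq_of_forall_succ_eq_sum F hYF (neg_weighted_conv_succ ha0 haF hpF)

/-- With `a_0 = -1`, `a_k = ∑_{i=0}^{k-1} a_i f_{n-k+i+1}` and
`p_k = ∑_{i=1}^k i·f_{n-i+1}·a_{k-i}` (with `f` of negative index equal to `0`), any operator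
`Y : R → R` satisfying `Y(f_n) = f_n` and
`Y^{m+1}(f_n) = (m+1)·f_{n-m} + ∑_{i=0}^{m-1} f_{n-i}·Y^{m-i}(f_n)` for all `m ≥ 1`,
satisfies `Y^k(f_n) = -p_k` for every `k ≥ 1`. -/
theorem stmt17 {R : Type*} [CommRing R] [Algebra ℚ R] (δ : Derivation ℚ R R)
    (n : ℕ) (f : ℤ → R) (hfneg : ∀ i : ℤ, i < 0 → f i = 0)
    (a : ℕ → R) (ha0 : a 0 = -1)
    (ha : ∀ k : ℕ, 1 ≤ k →
      a k = ∑ i ∈ Finset.range k, a i * f ((n : ℤ) - (k : ℤ) + (i : ℤ) + 1))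
    (p : ℕ → R)
    (hp : ∀ k : ℕ, 1 ≤ k →
      p k = ∑ i ∈ Finset.Icc 1 k, (i : R) * f ((n : ℤ) - (i : ℤ) + 1) * a (k - i))
    (Y : R → R)
    (hY1 : Y (f (n : ℤ)) = f (n : ℤ))
    (hY : ∀ m : ℕ, 1 ≤ m →
      Y^[m + 1] (f (n : ℤ)) = ((m : R) + 1) * f ((n : ℤ) - (m : ℤ))
        + ∑ i ∈ Finset.range m, f ((n : ℤ) - (i : ℤ)) * Y^[m - i] (f (n : ℤ))) :
    ∀ k : ℕ, 1 ≤ k → Y^[k] (f (n : ℤ)) = -p k :=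
  stmt17_general n f a ha0 ha p hp Y hY1 hY
end
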